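/- The maximum number of hyperedges in a 3-uniform hypergraph on 5 vertices containing no Berge-K_4 is exactly 5; that is, every family of 6 pairwise distinct 3-element subsets of a 5-element set contains a Berge-K_4, while some family of 5 such subsets contains none. -/

import Mathlib

open SimpleGraph

/-- A set family `A` of hyperedges contains a Berge-`G` hypergraph. -/
def BergeIn {V α : Type} (G : SimpleGraph V) (A : Set (Finset α)) : Prop :=
  ∃ φ : V → α, Function.Injective φ ∧
    ∃ ψ : G.edgeSet → Finset α, Function.Injective ψ ∧
      (∀ e, ψ e ∈ A) ∧
      ∀ (e : G.edgeSet), ∀ x ∈ (e : Sym2 V), φ x ∈ ψ e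

/-- The complete graph `K₄`. -/
def K4 : SimpleGraph (Fin 4) := ⊤

/-!
A Berge-`K₄` needs an injection of its six edges into the family, so five triples never carry one.
For six triples, choosing the four core vertices to be all but some `v` (the order is irrelevant,
as `K₄` is complete), a Berge-`K₄` is a system of distinct representatives for the six pairs among
them, each pair represented by a triple containing it; a backtracking search finds one for some `v`
in each of the 210 families of six triples.
-/

open Finset

section SDR

variable {ι β : Type*} [DecidableEq β] (r : ι → β → Prop) [DecidableRel r]

def sdrSearch : List ι → List β → Bool
  | [], _ => true
  | i :: is, bs => bs.any fun b => decide (r i b) && sdrSearch is (bs.filter (· ≠ b))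

variable {r} in
theorem exists_injective_of_sdrSearch {is : List ι} {bs : List β} (h : sdrSearch r is bs) :
    ∃ f : {i // i ∈ is} → β, Function.Injective f ∧ ∀ i, f i ∈ bs ∧ r i (f i) := by
  classical
  induction is generalizing bs with
  | nil => exact ⟨fun i => absurd i.2 List.not_mem_nil, fun i => absurd i.2 List.not_mem_nil,
      fun i => absurd i.2 List.not_mem_nil⟩
  | cons i is ih =>
    simp only [sdrSearch, List.any_eq_true, Bool.and_eq_true, decide_eq_true_eq] at h
    obtain ⟨b, hb, hrb, hrest⟩ := h
    obtain ⟨f, hinj, hf⟩ := ih hrest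
    have hf_mem : ∀ j, f j ∈ bs ∧ f j ≠ b := fun j => by simpa using (hf j).1
    let g : {j // j ∈ i :: is} → β := fun j =>
      if hj : j.1 = i then b else f ⟨j, (List.mem_cons.1 j.2).resolve_left hj⟩
    refine ⟨g, ?_, fun j => ?_⟩
    · rintro ⟨j, hj⟩ ⟨k, hk⟩ hjk
      simp only [g] at hjk
      split_ifs at hjk with h1 h2 h2
      · exact Subtype.ext (h1.trans h2.symm)
      · exact absurd hjk.symm (hf_mem _).2
      · exact absurd hjk (hf_mem _).2
      · exact Subtype.ext (congrArg Subtype.val (hinj hjk) :)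
    · simp only [g]
      split_ifs with hj
      · exact ⟨hb, by rwa [hj]⟩
      · exact ⟨(hf_mem _).1, (hf ⟨j, _⟩).2⟩

end SDR

theorem List.filter_mem_mem_sublistsLen {α : Type*} [DecidableEq α] {l : List α} (hl : l.Nodup)
    {s : Finset α} (hs : ∀ a ∈ s, a ∈ l) : l.filter (· ∈ s) ∈ l.sublistsLen #s := by
  have hsub : (l.filter (· ∈ s)).Sublist l := List.filter_sublist
  have hset : (l.filter (· ∈ s)).toFinset = s := by
    ext a
    simpa using fun ha => hs a ha
  refine List.mem_sublistsLen.2 ⟨hsub, ?_⟩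
  rw [← List.toFinset_card_of_nodup (hsub.nodup hl), hset]

section Berge

variable {V α : Type} {G : SimpleGraph V}

theorem bergeIn_of_sdrSearch [DecidableEq α] {A : Set (Finset α)} {φ : V → α}
    (hφ : Function.Injective φ) {es : List (Sym2 V)} (hes : ∀ e ∈ G.edgeSet, e ∈ es)
    {L : List (Finset α)} (hL : ∀ t ∈ L, t ∈ A)
    (h : sdrSearch (fun e t => e.map φ ∈ t.sym2) es L) : BergeIn G A := by
  obtain ⟨f, hf, hfL⟩ := exists_injective_of_sdrSearch h
  refine ⟨φ, hφ, fun e => f ⟨e, hes e e.2⟩, fun e e' hee' => ?_, fun e => hL _ (hfL _).1,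
    fun e x hx => ?_⟩
  · exact Subtype.ext (congrArg Subtype.val (hf hee') :)
  · exact Finset.mem_sym2_iff.1 (hfL _).2 _ (Sym2.mem_map.2 ⟨x, hx, rfl⟩)

theorem BergeIn.natCard_edgeSet_le {H : Finset (Finset α)} (h : BergeIn G (H : Set (Finset α))) :
    Nat.card G.edgeSet ≤ #H := by
  obtain ⟨-, -, ψ, hψ, hψH, -⟩ := h
  simpa using Nat.card_le_card_of_injective (fun e => (⟨ψ e, hψH e⟩ : (H : Set (Finset α))))
    fun e e' h => hψ (congrArg Subtype.val h)

end Berge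

theorem natCard_edgeSet_K4 : Nat.card K4.edgeSet = 6 := by
  unfold K4
  rw [Nat.card_eq_fintype_card, ← edgeFinset_card, card_edgeFinset_top_eq_card_choose_two]
  rfl

def k4Edges : List (Sym2 (Fin 4)) := [s(0, 1), s(0, 2), s(0, 3), s(1, 2), s(1, 3), s(2, 3)]

theorem mem_k4Edges : ∀ e ∈ K4.edgeSet, e ∈ k4Edges := by
  unfold K4
  simp only [edgeSet_top, Set.mem_compl_iff, Sym2.mem_diagSet]
  decide

def triples : List (Finset (Fin 5)) := ((List.finRange 5).sublistsLen 3).map List.toFinset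

theorem triples_nodup : triples.Nodup := by decide

theorem mem_triples_of_card_eq_three : ∀ t : Finset (Fin 5), #t = 3 → t ∈ triples := by decide

theorem exists_sdrSearch_k4Edges : ∀ L ∈ triples.sublistsLen 6, ∃ v : Fin 5,
    sdrSearch (fun e t => e.map v.succAbove ∈ t.sym2) k4Edges L := by
  decide +kernel

/-- `ex₃(5, 𝓑(K₄)) = 5`: every family of 6 distinct 3-element subsets of a 5-element set
contains a Berge-`K₄`, while some family of 5 such subsets contains none. -/
theorem turan_berge_K4_five :
    (∀ H : Finset (Finset (Fin 5)), (∀ s ∈ H, s.card = 3) → H.card = 6 →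
      BergeIn K4 (↑H : Set (Finset (Fin 5)))) ∧
    (∃ H : Finset (Finset (Fin 5)), (∀ s ∈ H, s.card = 3) ∧ H.card = 5 ∧
      ¬ BergeIn K4 (↑H : Set (Finset (Fin 5)))) := by
  refine ⟨fun H h3 h6 => ?_, ⟨{{0, 1, 2}, {0, 1, 3}, {0, 1, 4}, {0, 2, 3}, {0, 2, 4}},
    by decide, by decide, fun h => ?_⟩⟩
  · have hL := List.filter_mem_mem_sublistsLen triples_nodup
      fun t ht => mem_triples_of_card_eq_three t (h3 t ht)
    rw [h6] at hL
    obtain ⟨v, hv⟩ := exists_sdrSearch_k4Edges _ hL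
    exact bergeIn_of_sdrSearch Fin.succAbove_right_injective mem_k4Edges
      (fun t ht => by simpa using (List.mem_filter.1 ht).2) hv
  · have := BergeIn.natCard_edgeSet_le h
    rw [natCard_edgeSet_K4] at this
    exact absurd this (by decide)
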